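/- Suppose Y ∈ {0,1}^n, D ∈ {0,1}^n is a deletion pattern deleting exactly one position i with D_i = 1, and i lies in run r of Y. If the run of Y immediately following r is not entirely deleted (which holds trivially for a single deletion), then the greedy alignment of the output X against Y places its reconstructed deletion in run r. -/

import Mathlib

/-- The greedy left-to-right alignment: match each successive bit of `X` to the
leftmost feasible position of `Y` (positions counted from `k`), returning the
list of matched indices, or `none` upon failure. -/
def greedyAux : List Bool → List Bool → ℕ → Option (List ℕ)
  | [], _, _ => some []
  | _ :: _, [], _ => none
  | x :: xs, y :: ys, k =>
    if x = y then (greedyAux xs ys (k + 1)).map (fun L => k :: L)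
    else greedyAux (x :: xs) ys (k + 1)
termination_by _ Y _ => Y.length

/-- `i` and `j` lie in (the closure of) the same run of the binary sequence `Y`. -/
def sameRun (Y : List Bool) (i j : ℕ) : Prop :=
  i < Y.length ∧ j < Y.length ∧
    ∀ k, min i j ≤ k → k ≤ max i j → Y.getD k false = Y.getD i false

lemma greedy_self : ∀ (L : List Bool) (k : ℕ),
    greedyAux L L k = some (List.range' k L.length)
  | [], k => by simp [greedyAux]
  | a :: t, k => by
      rw [greedyAux]
      simp [greedy_self t (k+1), List.range'_succ]

lemma greedy_prefix : ∀ (p xs ys : List Bool) (k : ℕ),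
    greedyAux (p ++ xs) (p ++ ys) k =
      (greedyAux xs ys (k + p.length)).map (fun L => List.range' k p.length ++ L)
  | [], xs, ys, k => by
      cases h : greedyAux xs ys k <;> simp [h]
  | a :: p', xs, ys, k => by
      simp only [List.cons_append]
      rw [greedyAux]
      simp only [if_pos rfl, greedy_prefix p' xs ys (k+1), Option.map_map]
      have h1 : k + 1 + p'.length = k + (a :: p').length := by
        simp; omega
      rw [h1]
      have h2 : List.range' k ((a :: p').length) = k :: List.range' (k+1) p'.length := by
        rw [List.length_cons, List.range'_succ]
      simp only [h2, List.cons_append, if_true, Option.map_map, Function.comp]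
      rfl

lemma greedy_tail : ∀ (t : List Bool) (y : Bool) (k : ℕ),
    ∃ j0 L, greedyAux t (y :: t) k = some L ∧ k ≤ j0 ∧ j0 ≤ k + t.length ∧
      (∀ j, j ∈ L ↔ (k ≤ j ∧ j ≤ k + t.length ∧ j ≠ j0)) ∧
      (∀ m, k ≤ m → m ≤ j0 → (y :: t).getD (m - k) false = y)
  | [], y, k => by
      refine ⟨k, [], by rw [greedyAux], le_refl k, by simp, ?_, ?_⟩
      · intro j; simp; omega
      · intro m hm hm'
        have : m = k := by omega
        simp [this]
  | y' :: t', y, k => by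
      by_cases h : y' = y
      · subst h
        obtain ⟨j0, L, hgr, hj1, hj2, hmem, hrun⟩ := greedy_tail t' y' (k + 1)
        refine ⟨j0, k :: L, ?_, by omega, by rw [List.length_cons]; omega, ?_, ?_⟩
        · rw [greedyAux]
          simp [hgr]
        · intro j
          simp only [List.mem_cons, hmem, List.length_cons]
          constructor
          · rintro (rfl | ⟨h1, h2, h3⟩)
            · refine ⟨le_refl _, by omega, by omega⟩
            · exact ⟨by omega, by omega, h3⟩
          · rintro ⟨h1, h2, h3⟩
            by_cases hk : j = k
            · exact Or.inl hk
            · exact Or.inr ⟨by omega, by omega, h3⟩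
        · intro m hm hm'
          by_cases hk : m = k
          · simp [hk]
          · have h1 : m - k = (m - (k + 1)) + 1 := by omega
            rw [h1, List.getD_cons_succ]
            exact hrun m (by omega) hm'
      · refine ⟨k, List.range' (k+1) (t'.length + 1), ?_, le_refl _, by rw [List.length_cons]; omega, ?_, ?_⟩
        · rw [greedyAux]
          rw [if_neg h]
          have := greedy_self (y' :: t') (k + 1)
          simpa using this
        · intro j
          rw [List.mem_range'_1]
          simp only [List.length_cons]
          omega
        · intro m hm hm'
          have : m = k := by omega
          simp [this]

/-- If X is obtained from Y by deleting the single position i, lying in run r of Y,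
then the greedy alignment of X against Y succeeds and the position of Y it leaves
unmatched (the reconstructed deletion) lies in the same run r as i. -/
theorem stmt19 (Y X : List Bool) (i : ℕ) (hi : i < Y.length)
    (hX : X = Y.eraseIdx i) :
    ∃ L : List ℕ, greedyAux X Y 0 = some L ∧
      ∀ j, j < Y.length → j ∉ L → sameRun Y i j := by
  -- decompose Y
  set p := Y.take i with hp
  have hplen : p.length = i := by
    simp [hp, List.length_take]; omega
  have hYsplit : Y = p ++ Y.drop i := (List.take_append_drop i Y).symm
  have hne : Y.drop i ≠ [] := by
    intro h
    have : (Y.drop i).length = Y.length - i := List.length_drop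
    rw [h] at this
    simp at this
    omega
  obtain ⟨y, t, hyt⟩ := List.exists_cons_of_ne_nil hne
  have hXsplit : X = p ++ t := by
    rw [hX, List.eraseIdx_eq_take_drop_succ]
    have : Y.drop (i + 1) = (Y.drop i).tail := by
      rw [← List.drop_drop]; simp [List.drop_one]
    rw [this, hyt]
    rfl
  have hYlen : Y.length = i + t.length + 1 := by
    have : (Y.drop i).length = Y.length - i := List.length_drop
    rw [hyt] at this
    simp at this
    omega
  obtain ⟨j0, L', hgr, hj1, hj2, hmem, hrun⟩ := greedy_tail t y i
  refine ⟨List.range' 0 i ++ L', ?_, ?_⟩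
  · conv_lhs => rw [hXsplit, hYsplit, hyt]
    rw [greedy_prefix]
    rw [hplen]
    simp only [Nat.zero_add, hgr, Option.map_some]
  · intro j hjlen hjL
    simp only [List.mem_append, List.mem_range'_1, not_or] at hjL
    obtain ⟨hj3, hj4⟩ := hjL
    have hij : i ≤ j := by
      by_contra h
      exact hj3 ⟨by omega, by omega⟩
    have hjj0 : j = j0 := by
      by_contra h
      exact hj4 ((hmem j).mpr ⟨hij, by omega, h⟩)
    subst hjj0
    -- getD of Y in terms of the drop
    have hgetD : ∀ m, i ≤ m → Y.getD m false = (y :: t).getD (m - i) false := by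
      intro m hm
      conv_lhs => rw [hYsplit, hyt]
      rw [List.getD_append_right _ _ _ _ (by omega : p.length ≤ m), hplen]
    have hYi : Y.getD i false = y := by
      rw [hgetD i (le_refl i)]
      simp
    refine ⟨hi, by omega, ?_⟩
    intro m hm1 hm2
    rw [min_eq_left hij] at hm1
    rw [max_eq_right hij] at hm2
    rw [hgetD m hm1, hYi]
    exact hrun m hm1 hm2
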